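/- Let f : ℝⁿ → ℝ be differentiable and L-smooth, with nonempty solution set X* and minimum value f*. Let x_0 ∈ ℝⁿ, let x* = P(x_0) be the point of X* closest to x_0, and suppose f is α-weakly-quasi-convex with respect to x* with constant α ∈ (0,1] and satisfies the quadratic growth condition with constant μ > 0. Consider the conjugate-gradient-type iteration: q_0 = 0, and for each k, x̂_k is a global minimizer of f over the affine subspace x_0 + span{x_k − x_0, q_k}, x_{k+1} = x̂_k − (1/L)∇f(x̂_k), and q_{k+1} = q_k + ∇f(x̂_k). Then for T = ⌈(4/(3α))·√(L/μ)⌉, one has f(x_T) − f* ≤ (3/4)·(f(x_0) − f*). -/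

import Mathlib

open scoped RealInnerProductSpace
open Finset

/-!
Since `x̂ₖ` minimizes `f` on `x₀ + span {xₖ - x₀, qₖ}`, the gradient `gₖ = ∇f(x̂ₖ)` is orthogonal
to `x̂ₖ - x₀` and to `qₖ = g₀ + ⋯ + gₖ₋₁`. Orthogonality to `qₖ` gives `‖q_T‖² = ∑ ‖gₖ‖²`, which the
gradient steps bound by `2L (f(x₀) - f(x_T))`. Orthogonality to `x̂ₖ - x₀` turns weak
quasi-convexity at `x̂ₖ` into `α (f(x_T) - f*) ≤ ⟪gₖ, x₀ - x*⟫`; summing, `T α δ ≤ ‖q_T‖ ‖x₀ - x*‖`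
with `δ = f(x_T) - f*`. Quadratic growth bounds `‖x₀ - x*‖² ≤ 2Δ/μ` with `Δ = f(x₀) - f*`, so
`(T α δ)² ≤ (4L/μ) Δ (Δ - δ)`, and `T α ≥ (4/3) √(L/μ)` forces `δ ≤ 3Δ/4`.
-/

variable {E : Type*} [NormedAddCommGroup E] [InnerProductSpace ℝ E] [CompleteSpace E]
  {f : E → ℝ}

theorem hasDerivAt_comp_add_smul {c u : E} {t : ℝ} (hf : DifferentiableAt ℝ f (c + t • u)) :
    HasDerivAt (fun s : ℝ => f (c + s • u)) ⟪gradient f (c + t • u), u⟫ t := by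
  have hline : HasDerivAt (fun s : ℝ => c + s • u) u t := by
    simpa using ((hasDerivAt_id t).smul_const u).const_add c
  rw [inner_gradient_left]
  exact hf.hasFDerivAt.comp_hasDerivAt t hline

theorem inner_gradient_eq_zero_of_forall_le_add_smul {c u : E} (hf : DifferentiableAt ℝ f c)
    (hmin : ∀ t : ℝ, f c ≤ f (c + t • u)) : ⟪gradient f c, u⟫ = 0 := by
  have hd := hasDerivAt_comp_add_smul (t := 0) (u := u) (by simpa using hf)
  simp only [zero_smul, add_zero] at hd
  exact IsLocalMin.hasDerivAt_eq_zero
    (Filter.Eventually.of_forall fun t => by simpa using hmin t) hd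

theorem inner_gradient_eq_zero_of_forall_le_add_smul_add_smul {p c u v : E}
    (hf : DifferentiableAt ℝ f p) (hp : ∃ a b : ℝ, p = c + a • u + b • v)
    (hmin : ∀ a b : ℝ, f p ≤ f (c + a • u + b • v)) :
    ⟪gradient f p, u⟫ = 0 ∧ ⟪gradient f p, v⟫ = 0 := by
  obtain ⟨a, b, rfl⟩ := hp
  constructor
  · refine inner_gradient_eq_zero_of_forall_le_add_smul hf fun t => ?_
    convert hmin (a + t) b using 2
    rw [add_smul]; abel
  · refine inner_gradient_eq_zero_of_forall_le_add_smul hf fun t => ?_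
    convert hmin a (b + t) using 2
    rw [add_smul]; abel

theorem le_add_inner_gradient_add_of_lipschitz_gradient (hf : Differentiable ℝ f) {L : ℝ}
    (hsmooth : ∀ x y : E, ‖gradient f y - gradient f x‖ ≤ L * ‖y - x‖) (x y : E) :
    f y ≤ f x + ⟪gradient f x, y - x⟫ + L / 2 * ‖y - x‖ ^ 2 := by
  set u := y - x
  let φ : ℝ → ℝ := fun t => f (x + t • u) - t * ⟪gradient f x, u⟫ - L / 2 * t ^ 2 * ‖u‖ ^ 2
  have hφ : ∀ t, HasDerivAt φ
      (⟪gradient f (x + t • u) - gradient f x, u⟫ - L * t * ‖u‖ ^ 2) t := by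
    intro t
    refine (((hasDerivAt_comp_add_smul (c := x) (u := u) (hf _)).sub
      ((hasDerivAt_id t).mul_const ⟪gradient f x, u⟫)).sub
      (((hasDerivAt_pow 2 t).const_mul (L / 2)).mul_const (‖u‖ ^ 2))).congr_deriv ?_
    rw [inner_sub_left, Nat.cast_ofNat, Nat.add_one_sub_one, pow_one]; ring
  have hφ_nonpos : ∀ t, 0 ≤ t →
      ⟪gradient f (x + t • u) - gradient f x, u⟫ - L * t * ‖u‖ ^ 2 ≤ 0 := by
    intro t ht
    have := calc ⟪gradient f (x + t • u) - gradient f x, u⟫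
        ≤ ‖gradient f (x + t • u) - gradient f x‖ * ‖u‖ := real_inner_le_norm _ _
      _ ≤ L * ‖x + t • u - x‖ * ‖u‖ := by gcongr; exact hsmooth _ _
      _ = L * t * ‖u‖ ^ 2 := by
        rw [add_sub_cancel_left, norm_smul, Real.norm_of_nonneg ht]; ring
    linarith
  have hanti : AntitoneOn φ (Set.Ici 0) :=
    antitoneOn_of_hasDerivWithinAt_nonpos (convex_Ici 0)
      (fun t _ => (hφ t).continuousAt.continuousWithinAt) (fun t _ => (hφ t).hasDerivWithinAt)
      (fun t ht => hφ_nonpos t (interior_subset ht))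
  have hφ0 : φ 0 = f x := by simp [φ]
  have hφ1 : φ 1 = f y - ⟪gradient f x, y - x⟫ - L / 2 * ‖y - x‖ ^ 2 := by simp [φ, u]
  linarith [hanti Set.self_mem_Ici (Set.mem_Ici.2 zero_le_one) zero_le_one]

theorem apply_sub_smul_gradient_le (hf : Differentiable ℝ f) {L : ℝ} (hL : 0 < L)
    (hsmooth : ∀ x y : E, ‖gradient f y - gradient f x‖ ≤ L * ‖y - x‖) (y : E) :
    f (y - (1 / L) • gradient f y) ≤ f y - ‖gradient f y‖ ^ 2 / (2 * L) := by
  calc _ ≤ f y + ⟪gradient f y, -((1 / L) • gradient f y)⟫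
        + L / 2 * ‖-((1 / L) • gradient f y)‖ ^ 2 := by
        simpa [sub_eq_add_neg] using
          le_add_inner_gradient_add_of_lipschitz_gradient hf hsmooth y
            (y - (1 / L) • gradient f y)
    _ = _ := by
      rw [inner_neg_right, real_inner_smul_right, real_inner_self_eq_norm_sq, norm_neg,
        norm_smul, Real.norm_of_nonneg (by positivity)]
      field_simp; ring

structure NemirovskiCG (f : E → ℝ) (L : ℝ) (x q xhat : ℕ → E) : Prop where
  q_zero : q 0 = 0
  xhat_mem : ∀ k, ∃ a b : ℝ, xhat k = x 0 + a • (x k - x 0) + b • q k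
  xhat_min : ∀ k (a b : ℝ), f (xhat k) ≤ f (x 0 + a • (x k - x 0) + b • q k)
  x_succ : ∀ k, x (k + 1) = xhat k - (1 / L) • gradient f (xhat k)
  q_succ : ∀ k, q (k + 1) = q k + gradient f (xhat k)

namespace NemirovskiCG

variable {L : ℝ} {x q xhat : ℕ → E}

theorem inner_gradient_xhat_q (hcg : NemirovskiCG f L x q xhat) (hf : Differentiable ℝ f)
    (k : ℕ) : ⟪gradient f (xhat k), q k⟫ = 0 :=
  (inner_gradient_eq_zero_of_forall_le_add_smul_add_smul (hf _) (hcg.xhat_mem k)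
    (hcg.xhat_min k)).2

theorem inner_gradient_xhat_sub (hcg : NemirovskiCG f L x q xhat) (hf : Differentiable ℝ f)
    (k : ℕ) : ⟪gradient f (xhat k), xhat k - x 0⟫ = 0 := by
  obtain ⟨a, b, hab⟩ := hcg.xhat_mem k
  obtain ⟨hu, hv⟩ := inner_gradient_eq_zero_of_forall_le_add_smul_add_smul (hf _)
    (hcg.xhat_mem k) (hcg.xhat_min k)
  have hsub : xhat k - x 0 = a • (x k - x 0) + b • q k := by rw [hab]; abel
  rw [hsub, inner_add_right, real_inner_smul_right, real_inner_smul_right, hu, hv]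
  ring

theorem apply_xhat_le (hcg : NemirovskiCG f L x q xhat) (k : ℕ) : f (xhat k) ≤ f (x k) := by
  simpa using hcg.xhat_min k 1 0

theorem apply_succ_le (hcg : NemirovskiCG f L x q xhat) (hf : Differentiable ℝ f) (hL : 0 < L)
    (hsmooth : ∀ x y : E, ‖gradient f y - gradient f x‖ ≤ L * ‖y - x‖) (k : ℕ) :
    f (x (k + 1)) ≤ f (xhat k) - ‖gradient f (xhat k)‖ ^ 2 / (2 * L) :=
  hcg.x_succ k ▸ apply_sub_smul_gradient_le hf hL hsmooth _

theorem apply_succ_le_apply_xhat (hcg : NemirovskiCG f L x q xhat) (hf : Differentiable ℝ f)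
    (hL : 0 < L) (hsmooth : ∀ x y : E, ‖gradient f y - gradient f x‖ ≤ L * ‖y - x‖) (k : ℕ) :
    f (x (k + 1)) ≤ f (xhat k) :=
  (hcg.apply_succ_le hf hL hsmooth k).trans (sub_le_self _ (by positivity))

theorem antitone_apply (hcg : NemirovskiCG f L x q xhat) (hf : Differentiable ℝ f)
    (hL : 0 < L) (hsmooth : ∀ x y : E, ‖gradient f y - gradient f x‖ ≤ L * ‖y - x‖) :
    Antitone (f ∘ x) :=
  antitone_nat_of_succ_le fun k =>
    (hcg.apply_succ_le_apply_xhat hf hL hsmooth k).trans (hcg.apply_xhat_le k)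

theorem q_eq_sum (hcg : NemirovskiCG f L x q xhat) (k : ℕ) :
    q k = ∑ i ∈ range k, gradient f (xhat i) := by
  induction k with
  | zero => simp [hcg.q_zero]
  | succ k ih => rw [hcg.q_succ, ih, sum_range_succ]

theorem norm_q_sq (hcg : NemirovskiCG f L x q xhat) (hf : Differentiable ℝ f) (k : ℕ) :
    ‖q k‖ ^ 2 = ∑ i ∈ range k, ‖gradient f (xhat i)‖ ^ 2 := by
  induction k with
  | zero => simp [hcg.q_zero]
  | succ k ih =>
    rw [hcg.q_succ, sum_range_succ, ← ih, norm_add_sq_real, real_inner_comm,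
      hcg.inner_gradient_xhat_q hf]
    ring

theorem norm_q_sq_le (hcg : NemirovskiCG f L x q xhat) (hf : Differentiable ℝ f) (hL : 0 < L)
    (hsmooth : ∀ x y : E, ‖gradient f y - gradient f x‖ ≤ L * ‖y - x‖) (T : ℕ) :
    ‖q T‖ ^ 2 ≤ 2 * L * (f (x 0) - f (x T)) := by
  rw [hcg.norm_q_sq hf, ← sum_range_sub' (fun k => f (x k)), mul_sum]
  gcongr with k
  rw [← div_le_iff₀' (by positivity)]
  linarith [hcg.apply_succ_le hf hL hsmooth k, hcg.apply_xhat_le k]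

theorem mul_sub_le_inner (hcg : NemirovskiCG f L x q xhat) (hf : Differentiable ℝ f)
    (hL : 0 < L) (hsmooth : ∀ x y : E, ‖gradient f y - gradient f x‖ ≤ L * ‖y - x‖)
    {α fstar : ℝ} {xstar : E} (hα : 0 ≤ α)
    (hwqc : ∀ z, α * (f z - fstar) ≤ ⟪gradient f z, z - xstar⟫) (T : ℕ) :
    T * (α * (f (x T) - fstar)) ≤ ⟪q T, x 0 - xstar⟫ := by
  have hterm : ∀ k ∈ range T, α * (f (x T) - fstar) ≤ ⟪gradient f (xhat k), x 0 - xstar⟫ := by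
    intro k hk
    have hxT : f (x T) ≤ f (xhat k) :=
      (hcg.antitone_apply hf hL hsmooth (mem_range.1 hk)).trans
        (hcg.apply_succ_le_apply_xhat hf hL hsmooth k)
    calc α * (f (x T) - fstar) ≤ α * (f (xhat k) - fstar) := by gcongr
      _ ≤ ⟪gradient f (xhat k), xhat k - xstar⟫ := hwqc _
      _ = ⟪gradient f (xhat k), x 0 - xstar⟫ := by
        rw [← sub_add_sub_cancel (xhat k) (x 0) xstar, inner_add_right,
          hcg.inner_gradient_xhat_sub hf, zero_add]
  calc (T : ℝ) * (α * (f (x T) - fstar)) = #(range T) • (α * (f (x T) - fstar)) := by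
        rw [card_range, nsmul_eq_mul]
    _ ≤ ∑ k ∈ range T, ⟪gradient f (xhat k), x 0 - xstar⟫ := card_nsmul_le_sum _ _ _ hterm
    _ = ⟪q T, x 0 - xstar⟫ := by rw [hcg.q_eq_sum, sum_inner]

theorem sq_mul_sub_le (hcg : NemirovskiCG f L x q xhat) (hf : Differentiable ℝ f)
    (hL : 0 < L) (hsmooth : ∀ x y : E, ‖gradient f y - gradient f x‖ ≤ L * ‖y - x‖)
    {α fstar : ℝ} {xstar : E} (hα : 0 ≤ α)
    (hwqc : ∀ z, α * (f z - fstar) ≤ ⟪gradient f z, z - xstar⟫) {T : ℕ}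
    (hlow : fstar ≤ f (x T)) :
    (T * α * (f (x T) - fstar)) ^ 2 ≤ 2 * L * (f (x 0) - f (x T)) * ‖x 0 - xstar‖ ^ 2 := by
  have hCS : T * α * (f (x T) - fstar) ≤ ‖q T‖ * ‖x 0 - xstar‖ :=
    calc T * α * (f (x T) - fstar) = T * (α * (f (x T) - fstar)) := by ring
      _ ≤ ⟪q T, x 0 - xstar⟫ := hcg.mul_sub_le_inner hf hL hsmooth hα hwqc T
      _ ≤ ‖q T‖ * ‖x 0 - xstar‖ := real_inner_le_norm _ _
  have hδ : 0 ≤ f (x T) - fstar := sub_nonneg.2 hlow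
  calc (T * α * (f (x T) - fstar)) ^ 2 ≤ (‖q T‖ * ‖x 0 - xstar‖) ^ 2 := by gcongr
    _ = ‖q T‖ ^ 2 * ‖x 0 - xstar‖ ^ 2 := mul_pow _ _ _
    _ ≤ _ := by gcongr; exact hcg.norm_q_sq_le hf hL hsmooth T

theorem sub_le_three_quarters_mul (hcg : NemirovskiCG f L x q xhat) (hf : Differentiable ℝ f)
    (hL : 0 < L) (hsmooth : ∀ x y : E, ‖gradient f y - gradient f x‖ ≤ L * ‖y - x‖)
    {α μ fstar : ℝ} {xstar : E} (hα : 0 < α) (hμ : 0 < μ)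
    (hwqc : ∀ z, α * (f z - fstar) ≤ ⟪gradient f z, z - xstar⟫)
    (hQG : μ / 2 * ‖x 0 - xstar‖ ^ 2 ≤ f (x 0) - fstar) {T : ℕ} (hlow : fstar ≤ f (x T))
    (hT : 4 / (3 * α) * √(L / μ) ≤ T) :
    f (x T) - fstar ≤ 3 / 4 * (f (x 0) - fstar) := by
  have hTα : 16 * L ≤ 9 * μ * (T * α) ^ 2 := by
    have h : 4 / 3 * √(L / μ) ≤ T * α :=
      calc 4 / 3 * √(L / μ) = 4 / (3 * α) * √(L / μ) * α := by field_simp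
        _ ≤ T * α := by gcongr
    calc 16 * L = 9 * μ * (4 / 3 * √(L / μ)) ^ 2 := by
          rw [mul_pow, Real.sq_sqrt (by positivity)]; field_simp; ring
      _ ≤ 9 * μ * (T * α) ^ 2 := by gcongr
  have hsq := hcg.sq_mul_sub_le hf hL hsmooth hα.le hwqc hlow
  have hmono : f (x T) ≤ f (x 0) := hcg.antitone_apply hf hL hsmooth (Nat.zero_le T)
  set δ := f (x T) - fstar
  set Δ := f (x 0) - fstar
  have hgap : f (x 0) - f (x T) = Δ - δ := by ring
  have h4 : 4 * δ ^ 2 ≤ 9 * Δ * (Δ - δ) := by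
    refine le_of_mul_le_mul_left ?_ (by positivity : 0 < 4 * L)
    calc 4 * L * (4 * δ ^ 2) = 16 * L * δ ^ 2 := by ring
      _ ≤ 9 * μ * (T * α) ^ 2 * δ ^ 2 := by gcongr
      _ = 9 * μ * (T * α * δ) ^ 2 := by ring
      _ ≤ 9 * μ * (2 * L * (Δ - δ) * ‖x 0 - xstar‖ ^ 2) := by rw [← hgap]; gcongr
      _ = 36 * L * (Δ - δ) * (μ / 2 * ‖x 0 - xstar‖ ^ 2) := by ring
      _ ≤ 36 * L * (Δ - δ) * Δ := by gcongr; exact mul_nonneg (by positivity) (by linarith)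
      _ = 4 * L * (9 * Δ * (Δ - δ)) := by ring
  -- `4δ² ≤ 9Δ(Δ - δ)` says `(4δ - 3Δ)(δ + 3Δ) ≤ 0`.
  nlinarith [sub_nonneg.2 hlow]

end NemirovskiCG

theorem nemirovski_cg_convergence_general
    (n : ℕ) (f : EuclideanSpace ℝ (Fin n) → ℝ)
    (hdiff : Differentiable ℝ f)
    (L : ℝ) (hL : 0 < L)
    (hsmooth : ∀ x y : EuclideanSpace ℝ (Fin n),
      ‖gradient f y - gradient f x‖ ≤ L * ‖y - x‖)
    (fstar : ℝ)
    -- P is the projection onto the solution set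
    (P : EuclideanSpace ℝ (Fin n) → EuclideanSpace ℝ (Fin n))
    -- quadratic growth
    (μ : ℝ) (hμ : 0 < μ)
    (hQG : ∀ x, f x - fstar ≥ μ / 2 * ‖x - P x‖ ^ 2)
    -- starting point and the minimizer x* = P(x₀)
    (x : ℕ → EuclideanSpace ℝ (Fin n))
    (xstar : EuclideanSpace ℝ (Fin n)) (hxstar : xstar = P (x 0))
    -- α-weak-quasi-convexity with respect to x*
    (α : ℝ) (hα : α ∈ Set.Ioc (0 : ℝ) 1)
    (hwqc : ∀ z, α * (f z - fstar) ≤ ⟪gradient f z, z - xstar⟫)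
    -- the conjugate-gradient-type iteration
    (q xhat : ℕ → EuclideanSpace ℝ (Fin n))
    (hq0 : q 0 = 0)
    (hhatmem : ∀ k : ℕ, ∃ a b : ℝ, xhat k = x 0 + a • (x k - x 0) + b • q k)
    (hhatmin : ∀ (k : ℕ) (a b : ℝ), f (xhat k) ≤ f (x 0 + a • (x k - x 0) + b • q k))
    (hstep : ∀ k : ℕ, x (k + 1) = xhat k - (1 / L) • gradient f (xhat k))
    (hqrec : ∀ k : ℕ, q (k + 1) = q k + gradient f (xhat k))
    (T : ℕ) (hT : T = ⌈(4 / (3 * α)) * Real.sqrt (L / μ)⌉₊) :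
    f (x T) - fstar ≤ 3 / 4 * (f (x 0) - fstar) := by
  have hcg : NemirovskiCG f L x q xhat := ⟨hq0, hhatmem, hhatmin, hstep, hqrec⟩
  have hlow : fstar ≤ f (x T) :=
    sub_nonneg.1 ((by positivity : 0 ≤ μ / 2 * ‖x T - P (x T)‖ ^ 2).trans (hQG (x T)))
  exact hcg.sub_le_three_quarters_mul hdiff hL hsmooth hα.1 hμ hwqc (hxstar ▸ hQG (x 0)) hlow
    (hT ▸ Nat.le_ceil _)

theorem nemirovski_cg_convergence
    (n : ℕ) (f : EuclideanSpace ℝ (Fin n) → ℝ)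
    (hdiff : Differentiable ℝ f)
    (L : ℝ) (hL : 0 < L)
    (hsmooth : ∀ x y : EuclideanSpace ℝ (Fin n),
      ‖gradient f y - gradient f x‖ ≤ L * ‖y - x‖)
    (Xstar : Set (EuclideanSpace ℝ (Fin n)))
    (hXstar : Xstar = {z | ∀ y, f z ≤ f y})
    (hne : Xstar.Nonempty)
    (fstar : ℝ) (hfstar : ∀ z ∈ Xstar, f z = fstar)
    -- P is the projection onto the solution set
    (P : EuclideanSpace ℝ (Fin n) → EuclideanSpace ℝ (Fin n))
    (hPmem : ∀ x, P x ∈ Xstar)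
    (hPproj : ∀ x, ∀ z ∈ Xstar, ‖x - P x‖ ≤ ‖x - z‖)
    -- quadratic growth
    (μ : ℝ) (hμ : 0 < μ)
    (hQG : ∀ x, f x - fstar ≥ μ / 2 * ‖x - P x‖ ^ 2)
    -- starting point and the minimizer x* = P(x₀)
    (x : ℕ → EuclideanSpace ℝ (Fin n))
    (xstar : EuclideanSpace ℝ (Fin n)) (hxstar : xstar = P (x 0))
    -- α-weak-quasi-convexity with respect to x*
    (α : ℝ) (hα : α ∈ Set.Ioc (0 : ℝ) 1)
    (hwqc : ∀ z, α * (f z - fstar) ≤ ⟪gradient f z, z - xstar⟫)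
    -- the conjugate-gradient-type iteration
    (q xhat : ℕ → EuclideanSpace ℝ (Fin n))
    (hq0 : q 0 = 0)
    (hhatmem : ∀ k : ℕ, ∃ a b : ℝ, xhat k = x 0 + a • (x k - x 0) + b • q k)
    (hhatmin : ∀ (k : ℕ) (a b : ℝ), f (xhat k) ≤ f (x 0 + a • (x k - x 0) + b • q k))
    (hstep : ∀ k : ℕ, x (k + 1) = xhat k - (1 / L) • gradient f (xhat k))
    (hqrec : ∀ k : ℕ, q (k + 1) = q k + gradient f (xhat k))
    (T : ℕ) (hT : T = ⌈(4 / (3 * α)) * Real.sqrt (L / μ)⌉₊) :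
    f (x T) - fstar ≤ 3 / 4 * (f (x 0) - fstar) :=
  nemirovski_cg_convergence_general n f hdiff L hL hsmooth fstar P μ hμ hQG x xstar hxstar α hα hwqc
    q xhat hq0 hhatmem hhatmin hstep hqrec T hT
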